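/- arXiv:1011.5933 — 6 statements merged into one kernel-verified Lean document; each statement's English description precedes it below -/
import Mathlib

section
/- Let (Ω, μ) be a measure space, let κ : Ω → ℝ^{d×d} be a matrix-valued function and u : Ω → ℝ^d a vector-valued function, both square-integrable with respect to μ. Define β = ∫_Ω κ(y)u(y) μ(dy) ∈ ℝ^d and q = ∫_Ω κ(y)κ(y)ᵀ μ(dy) ∈ ℝ^{d×d}, and assume that q is positive definite. Then βᵀ q⁻¹ β ≤ ∫_Ω ‖u(y)‖² μ(dy). -/
open MeasureTheory Matrix

/-!
For every `ξ`, expanding `0 ≤ ∫ ‖u - κᵀ ξ‖² dμ` gives `2 ξᵀβ - ξᵀ q ξ ≤ ∫ ‖u‖² dμ`, since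
`∫ (κᵀξ)ᵀ u = ξᵀβ` and `∫ ‖κᵀξ‖² = ξᵀ q ξ`. The choice `ξ = q⁻¹ β`, which maximises the left
side, turns it into `βᵀ q⁻¹ β`.
-/

section

variable {Ω : Type*} [MeasurableSpace Ω] {μ : Measure Ω} {m n : Type*} [Fintype n]

theorem integrable_dotProduct_of_memLp_two {f g : Ω → n → ℝ} (hf : ∀ i, MemLp (f · i) 2 μ)
    (hg : ∀ i, MemLp (g · i) 2 μ) : Integrable (fun y => f y ⬝ᵥ g y) μ :=
  integrable_finsetSum _ fun i _ => (hf i).integrable_mul (hg i)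

theorem memLp_vecMul_apply {p : ENNReal} (ξ : n → ℝ) {κ : Ω → Matrix n m ℝ}
    (hκ : ∀ i j, MemLp (κ · i j) p μ) (j : m) : MemLp (fun y => (ξ ᵥ* κ y) j) p μ :=
  memLp_finsetSum _ fun i _ => (hκ i j).const_mul (ξ i)

theorem integral_dotProduct_const_left (ξ : n → ℝ) {f : Ω → n → ℝ}
    (hf : ∀ i, Integrable (f · i) μ) :
    ∫ y, ξ ⬝ᵥ f y ∂μ = ξ ⬝ᵥ fun i => ∫ y, f y i ∂μ := by
  simp only [dotProduct]
  rw [integral_finsetSum _ fun i _ => (hf i).const_mul _]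
  simp only [integral_const_mul]

theorem integral_mulVec_const (ξ : n → ℝ) {M : Ω → Matrix m n ℝ}
    (hM : ∀ i j, Integrable (M · i j) μ) :
    (fun i => ∫ y, (M y *ᵥ ξ) i ∂μ) = (of fun i j => ∫ y, M y i j ∂μ) *ᵥ ξ := by
  ext i
  simp only [mulVec, dotProduct_comm _ ξ]
  exact integral_dotProduct_const_left ξ (hM i)

theorem integral_vecMul_dotProduct [Fintype m] (ξ : m → ℝ) {κ : Ω → Matrix m n ℝ}
    {u : Ω → n → ℝ} (hκ : ∀ i j, MemLp (κ · i j) 2 μ) (hu : ∀ i, MemLp (u · i) 2 μ) :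
    ∫ y, (ξ ᵥ* κ y) ⬝ᵥ u y ∂μ = ξ ⬝ᵥ fun i => ∫ y, (κ y *ᵥ u y) i ∂μ := by
  simp only [← dotProduct_mulVec]
  exact integral_dotProduct_const_left ξ fun i => integrable_dotProduct_of_memLp_two (hκ i) hu

theorem integral_vecMul_dotProduct_vecMul [Fintype m] (ξ : m → ℝ) {κ : Ω → Matrix m n ℝ}
    (hκ : ∀ i j, MemLp (κ · i j) 2 μ) :
    ∫ y, (ξ ᵥ* κ y) ⬝ᵥ (ξ ᵥ* κ y) ∂μ
      = ξ ⬝ᵥ ((of fun i j => ∫ y, (κ y * (κ y)ᵀ) i j ∂μ) *ᵥ ξ) := by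
  have hκκ : ∀ i j, Integrable (fun y => (κ y * (κ y)ᵀ) i j) μ := fun i j => by
    simpa only [mul_apply', transpose_apply] using
      integrable_dotProduct_of_memLp_two (hκ i) (hκ j)
  have hquad : ∀ y, (ξ ᵥ* κ y) ⬝ᵥ (ξ ᵥ* κ y) = ξ ⬝ᵥ ((κ y * (κ y)ᵀ) *ᵥ ξ) := fun y => by
    rw [← mulVec_mulVec, mulVec_transpose, dotProduct_mulVec]
  simp only [hquad]
  rw [integral_dotProduct_const_left ξ fun i => ?_, integral_mulVec_const ξ hκκ]
  exact integrable_finsetSum _ fun j _ => (hκκ i j).mul_const _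

theorem two_mul_dotProduct_sub_le_integral_dotProduct_self [Fintype m] {κ : Ω → Matrix m n ℝ}
    {u : Ω → n → ℝ} (hκ : ∀ i j, MemLp (κ · i j) 2 μ) (hu : ∀ i, MemLp (u · i) 2 μ)
    (ξ : m → ℝ) :
    2 * (ξ ⬝ᵥ fun i => ∫ y, (κ y *ᵥ u y) i ∂μ)
        - ξ ⬝ᵥ ((of fun i j => ∫ y, (κ y * (κ y)ᵀ) i j ∂μ) *ᵥ ξ)
      ≤ ∫ y, u y ⬝ᵥ u y ∂μ := by
  set w : Ω → n → ℝ := fun y => ξ ᵥ* κ y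
  have hw : ∀ j, MemLp (w · j) 2 μ := memLp_vecMul_apply ξ hκ
  have huu := integrable_dotProduct_of_memLp_two hu hu
  have hwu := integrable_dotProduct_of_memLp_two hw hu
  have hww := integrable_dotProduct_of_memLp_two hw hw
  have expand : ∀ y, (u y - w y) ⬝ᵥ (u y - w y)
      = u y ⬝ᵥ u y - 2 * (w y ⬝ᵥ u y) + w y ⬝ᵥ w y := fun y => by
    simp only [sub_dotProduct, dotProduct_sub, dotProduct_comm (u y) (w y)]
    ring
  have nonneg : 0 ≤ ∫ y, (u y - w y) ⬝ᵥ (u y - w y) ∂μ :=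
    integral_nonneg fun y => by simpa using dotProduct_self_star_nonneg (u y - w y)
  rw [integral_congr_ae (.of_forall expand),
    integral_add (f := fun y => u y ⬝ᵥ u y - 2 * (w y ⬝ᵥ u y)) (huu.sub (hwu.const_mul 2)) hww,
    integral_sub huu (hwu.const_mul 2), integral_const_mul, integral_vecMul_dotProduct ξ hκ hu,
    integral_vecMul_dotProduct_vecMul ξ hκ] at nonneg
  linarith

end

/-- **Hölder-type inequality for matrix-valued integrals** (Lemma `HolderInequality`).
Let `(Ω, μ)` be a measure space, `κ : Ω → ℝ^{d×d}` matrix-valued and `u : Ω → ℝ^d`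
vector-valued, both square-integrable with respect to `μ`.  With
`β = ∫ κ(y) u(y) μ(dy)` and `q = ∫ κ(y) κ(y)ᵀ μ(dy)` positive definite, one has
`βᵀ q⁻¹ β ≤ ∫ ‖u(y)‖² μ(dy)`. -/
theorem holder_inequality_for_matrix_integrals
    {d : ℕ} {Ω : Type*} [MeasurableSpace Ω] (μ : Measure Ω)
    (κ : Ω → Matrix (Fin d) (Fin d) ℝ) (u : Ω → Fin d → ℝ)
    (hκ : ∀ i j, MemLp (fun y => κ y i j) 2 μ)
    (hu : ∀ i, MemLp (fun y => u y i) 2 μ)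
    (β : Fin d → ℝ) (hβ : β = fun i => ∫ y, (κ y).mulVec (u y) i ∂μ)
    (q : Matrix (Fin d) (Fin d) ℝ) (hq : q = Matrix.of fun i j => ∫ y, (κ y * (κ y)ᵀ) i j ∂μ)
    (hqpos : q.PosDef) :
    β ⬝ᵥ q⁻¹.mulVec β ≤ ∫ y, ∑ i, (u y i) ^ 2 ∂μ := by
  have key := two_mul_dotProduct_sub_le_integral_dotProduct_self hκ hu (q⁻¹ *ᵥ β)
  rw [← hβ, ← hq, mulVec_mulVec, mul_nonsing_inv q ((isUnit_iff_isUnit_det q).mp hqpos.isUnit),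
    one_mulVec, dotProduct_comm _ β] at key
  have hnorm : ∫ y, u y ⬝ᵥ u y ∂μ = ∫ y, ∑ i, (u y i) ^ 2 ∂μ := by simp only [dotProduct, sq]
  linarith
end

section
/- Let (Ω, μ) be a probability space, let κ : Ω → ℝ^{d×d} be square-integrable with respect to μ, let r, β ∈ ℝ^d, and set q = ∫_Ω κ(y)κ(y)ᵀ μ(dy); assume q is positive definite. Then the infimum of (1/2)∫_Ω ‖v(y)‖² μ(dy) over all v ∈ L²(μ; ℝ^d) satisfying β = r + ∫_Ω κ(y)v(y) μ(dy) equals (1/2)(β − r)ᵀ q⁻¹ (β − r), and this infimum is attained by the function v̄(y) = κ(y)ᵀ q⁻¹ (β − r), which satisfies the constraint and has cost exactly (1/2)(β − r)ᵀ q⁻¹ (β − r). -/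
/-!
The constraint map `v ↦ ∫ κ v` is continuous linear on `L²(μ; ℝ^d)` with adjoint `w ↦ κᵀ w`,
and `v̄ = κᵀ w` with `w = q⁻¹ (β - r)` lies in the range of that adjoint. Hence for every
admissible `v` the pairing `∫ v̄ ⬝ v = w ⬝ ∫ κ v = (β - r) ⬝ q⁻¹ (β - r)` does not depend on `v`;
taking `v = v̄` gives the cost of `v̄`, and expanding `∫ ‖v - v̄‖² ≥ 0` gives the lower bound.
-/

open MeasureTheory Matrix

theorem Matrix.two_mul_dotProduct_sub_dotProduct_self_le {n : Type*} [Fintype n] (u v : n → ℝ) :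
    2 * (u ⬝ᵥ v) - u ⬝ᵥ u ≤ v ⬝ᵥ v := by
  have := dotProduct_self_star_nonneg (v - u)
  simp only [star_trivial, sub_dotProduct, dotProduct_sub, dotProduct_comm v u] at this
  linarith

namespace MeasureTheory

variable {Ω : Type*} [MeasurableSpace Ω] {μ : Measure Ω} {m n : Type*} [Fintype n]

theorem integrable_dotProduct {u v : Ω → n → ℝ} (hu : ∀ j, MemLp (fun y => u y j) 2 μ)
    (hv : ∀ j, MemLp (fun y => v y j) 2 μ) : Integrable (fun y => u y ⬝ᵥ v y) μ :=
  integrable_finsetSum _ fun j _ => (hu j).integrable_mul (hv j)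

theorem memLp_mulVec_const_apply {A : Ω → Matrix m n ℝ}
    (hA : ∀ i j, MemLp (fun y => A y i j) 2 μ) (w : n → ℝ) (i : m) :
    MemLp (fun y => (A y *ᵥ w) i) 2 μ :=
  memLp_finsetSum _ fun j _ => by simpa only [mul_comm] using (hA i j).const_mul (w j)

theorem integral_const_dotProduct {f : Ω → n → ℝ} (hf : ∀ j, Integrable (fun y => f y j) μ)
    (w : n → ℝ) : ∫ y, w ⬝ᵥ f y ∂μ = w ⬝ᵥ fun j => ∫ y, f y j ∂μ := by
  simp only [dotProduct]
  rw [integral_finsetSum _ fun j _ => (hf j).const_mul (w j)]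
  simp only [integral_const_mul]

theorem integral_mulVec_const_apply {A : Ω → Matrix m n ℝ}
    (hA : ∀ i j, Integrable (fun y => A y i j) μ) (w : n → ℝ) (i : m) :
    ∫ y, (A y *ᵥ w) i ∂μ = ((Matrix.of fun i j => ∫ y, A y i j ∂μ) *ᵥ w) i := by
  simp only [mulVec, dotProduct_comm _ w, of_apply]
  exact integral_const_dotProduct (hA i) w

theorem integral_transpose_mulVec_dotProduct [Fintype m] {A : Ω → Matrix m n ℝ}
    (hA : ∀ i j, MemLp (fun y => A y i j) 2 μ) {v : Ω → n → ℝ}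
    (hv : ∀ j, MemLp (fun y => v y j) 2 μ) (w : m → ℝ) :
    ∫ y, ((A y)ᵀ *ᵥ w) ⬝ᵥ v y ∂μ = w ⬝ᵥ fun i => ∫ y, (A y *ᵥ v y) i ∂μ := by
  simp only [mulVec_transpose, ← dotProduct_mulVec]
  exact integral_const_dotProduct (fun i => integrable_dotProduct (hA i) hv) w

theorem integral_mulVec_transpose_mulVec_apply [Fintype m] {A : Ω → Matrix m n ℝ}
    (hA : ∀ i j, MemLp (fun y => A y i j) 2 μ) (w : m → ℝ) (i : m) :
    ∫ y, (A y *ᵥ ((A y)ᵀ *ᵥ w)) i ∂μ =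
      ((Matrix.of fun i k => ∫ y, (A y * (A y)ᵀ) i k ∂μ) *ᵥ w) i := by
  simp only [mulVec_mulVec]
  exact integral_mulVec_const_apply (A := fun y => A y * (A y)ᵀ)
    (fun i k => integrable_dotProduct (hA i) (hA k)) w i

theorem two_mul_integral_dotProduct_sub_le {u v : Ω → n → ℝ}
    (hu : ∀ j, MemLp (fun y => u y j) 2 μ) (hv : ∀ j, MemLp (fun y => v y j) 2 μ) :
    2 * ∫ y, u y ⬝ᵥ v y ∂μ - ∫ y, u y ⬝ᵥ u y ∂μ ≤ ∫ y, v y ⬝ᵥ v y ∂μ := by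
  rw [← integral_const_mul, ← integral_sub ((integrable_dotProduct hu hv).const_mul 2)
    (integrable_dotProduct hu hu)]
  exact integral_mono (((integrable_dotProduct hu hv).const_mul 2).sub
    (integrable_dotProduct hu hu)) (integrable_dotProduct hv hv)
    fun y => two_mul_dotProduct_sub_dotProduct_self_le (u y) (v y)

end MeasureTheory

theorem regime1_local_rate_function_explicit_solution_general
    {d : ℕ} {Ω : Type*} [MeasurableSpace Ω] (μ : Measure Ω)
    (κ : Ω → Matrix (Fin d) (Fin d) ℝ)
    (hκ : ∀ i j, MemLp (fun y => κ y i j) 2 μ)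
    (r β : Fin d → ℝ)
    (q : Matrix (Fin d) (Fin d) ℝ) (hq : q = Matrix.of fun i j => ∫ y, (κ y * (κ y)ᵀ) i j ∂μ)
    (hqpos : q.PosDef)
    (vbar : Ω → Fin d → ℝ)
    (hvbar : vbar = fun y => (κ y)ᵀ.mulVec (q⁻¹.mulVec (β - r))) :
    -- `v̄` is square integrable and satisfies the constraint
    (∀ i, MemLp (fun y => vbar y i) 2 μ) ∧
    (β = fun i => r i + ∫ y, (κ y).mulVec (vbar y) i ∂μ) ∧
    -- the cost of `v̄` is exactly `(1/2)(β − r)ᵀ q⁻¹ (β − r)`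
    ((1 / 2) * ∫ y, ∑ i, (vbar y i) ^ 2 ∂μ = (1 / 2) * ((β - r) ⬝ᵥ q⁻¹.mulVec (β - r))) ∧
    -- and this value is a lower bound over all admissible `v ∈ L²(μ; ℝ^d)`
    (∀ v : Ω → Fin d → ℝ, (∀ i, MemLp (fun y => v y i) 2 μ) →
      (β = fun i => r i + ∫ y, (κ y).mulVec (v y) i ∂μ) →
      (1 / 2) * ((β - r) ⬝ᵥ q⁻¹.mulVec (β - r)) ≤ (1 / 2) * ∫ y, ∑ i, (v y i) ^ 2 ∂μ) := by
  set b := β - r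
  set w := q⁻¹ *ᵥ b
  have admissible_iff (v : Ω → Fin d → ℝ) :
      (β = fun i => r i + ∫ y, (κ y *ᵥ v y) i ∂μ) ↔ (fun i => ∫ y, (κ y *ᵥ v y) i ∂μ) = b := by
    rw [eq_sub_iff_add_eq', eq_comm]
    rfl
  have sum_sq_eq (v : Ω → Fin d → ℝ) : (fun y => ∑ i, v y i ^ 2) = fun y => v y ⬝ᵥ v y := by
    simp only [dotProduct, sq]
  have hvbar_memLp : ∀ i, MemLp (fun y => vbar y i) 2 μ :=
    hvbar ▸ memLp_mulVec_const_apply (fun i j => hκ j i) w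
  have hvbar_constraint : (fun i => ∫ y, (κ y *ᵥ vbar y) i ∂μ) = b := by
    funext i
    simp only [hvbar]
    rw [integral_mulVec_transpose_mulVec_apply hκ, ← hq, mulVec_mulVec,
      mul_nonsing_inv q (q.isUnit_iff_isUnit_det.mp hqpos.isUnit), one_mulVec]
  have pairing (v : Ω → Fin d → ℝ) (hv : ∀ i, MemLp (fun y => v y i) 2 μ)
      (hadm : (fun i => ∫ y, (κ y *ᵥ v y) i ∂μ) = b) : ∫ y, vbar y ⬝ᵥ v y ∂μ = b ⬝ᵥ w := by
    rw [hvbar, integral_transpose_mulVec_dotProduct hκ hv w, hadm, dotProduct_comm]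
  have hcost : ∫ y, ∑ i, vbar y i ^ 2 ∂μ = b ⬝ᵥ w := by
    rw [sum_sq_eq, pairing vbar hvbar_memLp hvbar_constraint]
  refine ⟨hvbar_memLp, (admissible_iff vbar).2 hvbar_constraint, by rw [hcost], ?_⟩
  intro v hv hadm
  have lower := two_mul_integral_dotProduct_sub_le hvbar_memLp hv
  rw [pairing v hv ((admissible_iff v).1 hadm), ← sum_sq_eq, hcost, ← sum_sq_eq] at lower
  linarith

/-- **Explicit solution of the Regime 1 local rate function minimization.**
Let `(Ω, μ)` be a probability space, `κ : Ω → ℝ^{d×d}` square-integrable,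
`r, β ∈ ℝ^d`, and `q = ∫ κ κᵀ dμ` positive definite.  Then the infimum of
`(1/2) ∫ ‖v‖² dμ` over `v ∈ L²(μ; ℝ^d)` satisfying `β = r + ∫ κ v dμ` equals
`(1/2)(β − r)ᵀ q⁻¹ (β − r)`, and it is attained by `v̄(y) = κ(y)ᵀ q⁻¹ (β − r)`,
which satisfies the constraint and has exactly this cost. -/
theorem regime1_local_rate_function_explicit_solution
    {d : ℕ} {Ω : Type*} [MeasurableSpace Ω] (μ : Measure Ω) [IsProbabilityMeasure μ]
    (κ : Ω → Matrix (Fin d) (Fin d) ℝ)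
    (hκ : ∀ i j, MemLp (fun y => κ y i j) 2 μ)
    (r β : Fin d → ℝ)
    (q : Matrix (Fin d) (Fin d) ℝ) (hq : q = Matrix.of fun i j => ∫ y, (κ y * (κ y)ᵀ) i j ∂μ)
    (hqpos : q.PosDef)
    (vbar : Ω → Fin d → ℝ)
    (hvbar : vbar = fun y => (κ y)ᵀ.mulVec (q⁻¹.mulVec (β - r))) :
    -- `v̄` is square integrable and satisfies the constraint
    (∀ i, MemLp (fun y => vbar y i) 2 μ) ∧
    (β = fun i => r i + ∫ y, (κ y).mulVec (vbar y) i ∂μ) ∧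
    -- the cost of `v̄` is exactly `(1/2)(β − r)ᵀ q⁻¹ (β − r)`
    ((1 / 2) * ∫ y, ∑ i, (vbar y i) ^ 2 ∂μ = (1 / 2) * ((β - r) ⬝ᵥ q⁻¹.mulVec (β - r))) ∧
    -- and this value is a lower bound over all admissible `v ∈ L²(μ; ℝ^d)`
    (∀ v : Ω → Fin d → ℝ, (∀ i, MemLp (fun y => v y i) 2 μ) →
      (β = fun i => r i + ∫ y, (κ y).mulVec (v y) i ∂μ) →
      (1 / 2) * ((β - r) ⬝ᵥ q⁻¹.mulVec (β - r)) ≤ (1 / 2) * ∫ y, ∑ i, (v y i) ^ 2 ∂μ) :=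
  regime1_local_rate_function_explicit_solution_general μ κ hκ r β q hq hqpos vbar hvbar
end

section
/- Fix x ∈ ℝ^d. The function β ↦ L₂^r(x, β), mapping ℝ^d into [0, ∞], is convex: for all β₁, β₂ ∈ ℝ^d and η ∈ [0,1], L₂^r(x, ηβ₁ + (1−η)β₂) ≤ η L₂^r(x, β₁) + (1−η) L₂^r(x, β₂). -/
open MeasureTheory Matrix Filter

noncomputable section

/-- The control space `Z = ℝ^d`. -/
abbrev Ctrl (d : ℕ) := Fin d → ℝ

/-- The `d`-dimensional torus `𝕋^d = ℝ^d/ℤ^d`. -/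
abbrev Torus (d : ℕ) := Fin d → AddCircle (1 : ℝ)

/-- The canonical projection `ℝ^d → 𝕋^d`. -/
def torusProj (d : ℕ) (w : Fin d → ℝ) : Torus d := fun i => (w i : AddCircle (1 : ℝ))

/-- `λ₂(x,y,z) = γ b(x,y) + c(x,y) + σ(x,y) z`. -/
def lam2 {d : ℕ} (γ : ℝ) (b c : (Fin d → ℝ) → Torus d → Fin d → ℝ)
    (σ : (Fin d → ℝ) → Torus d → Matrix (Fin d) (Fin d) ℝ)
    (x : Fin d → ℝ) (y : Torus d) (z : Ctrl d) : Fin d → ℝ :=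
  fun i => γ * b x y i + c x y i + (σ x y).mulVec z i

/-- A function `F : ℝ^d → ℝ` is a `C²` representative of a test function on the torus
if it is twice continuously differentiable and `ℤ^d`-periodic. -/
def IsC2Periodic {d : ℕ} (F : (Fin d → ℝ) → ℝ) : Prop :=
  ContDiff ℝ 2 F ∧ ∀ (w : Fin d → ℝ) (m : Fin d → ℤ), F (w + fun i => (m i : ℝ)) = F w

/-- The generator `ℒ²_{z,x} f(y)` expressed through a periodic representative `F = f ∘ π`. -/
def gen2 {d : ℕ} (γ : ℝ) (b c : (Fin d → ℝ) → Torus d → Fin d → ℝ)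
    (σ : (Fin d → ℝ) → Torus d → Matrix (Fin d) (Fin d) ℝ)
    (x : Fin d → ℝ) (z : Ctrl d) (F : (Fin d → ℝ) → ℝ) (w : Fin d → ℝ) : ℝ :=
  (∑ i, lam2 γ b c σ x (torusProj d w) z i * fderiv ℝ F w (Pi.single i 1)) +
    (γ / 2) * ∑ i, ∑ j, (σ x (torusProj d w) * (σ x (torusProj d w))ᵀ) i j *
      fderiv ℝ (fun v => fderiv ℝ F v (Pi.single j 1)) w (Pi.single i 1)

/-- The admissible set `A²_{x,β}`: Borel probability measures `P` on `ℝ^d × 𝕋^d` with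
finite second moment in `z`, annihilating the generator `ℒ²_{z,x}`, and with
`∫ λ₂(x,y,z) dP = β`. -/
def A2 {d : ℕ} (γ : ℝ) (b c : (Fin d → ℝ) → Torus d → Fin d → ℝ)
    (σ : (Fin d → ℝ) → Torus d → Matrix (Fin d) (Fin d) ℝ)
    (x β : Fin d → ℝ) : Set (Measure (Ctrl d × Torus d)) :=
  {P | IsProbabilityMeasure P ∧
    Integrable (fun p : Ctrl d × Torus d => ∑ i, (p.1 i) ^ 2) P ∧
    (∀ F : (Fin d → ℝ) → ℝ, IsC2Periodic F →
      ∀ g : Ctrl d × Torus d → ℝ,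
        (∀ (z : Ctrl d) (w : Fin d → ℝ), g (z, torusProj d w) = gen2 γ b c σ x z F w) →
        ∫ p, g p ∂P = 0) ∧
    (∀ i, ∫ p, lam2 γ b c σ x p.2 p.1 i ∂P = β i)}

/-- The relaxed local rate function
`L₂^r(x,β) = inf_{P ∈ A²_{x,β}} (1/2) ∫ ‖z‖² dP ∈ [0,∞]` (infimum over `∅` is `∞`). -/
def L2r {d : ℕ} (γ : ℝ) (b c : (Fin d → ℝ) → Torus d → Fin d → ℝ)
    (σ : (Fin d → ℝ) → Torus d → Matrix (Fin d) (Fin d) ℝ)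
    (x β : Fin d → ℝ) : ENNReal :=
  ⨅ (P : Measure (Ctrl d × Torus d)) (_ : P ∈ A2 γ b c σ x β),
    ENNReal.ofReal ((1 / 2) * ∫ p, ∑ i, (p.1 i) ^ 2 ∂P)

end


section Aux

open MeasureTheory

/-- A function on the torus is measurable provided its periodic representative is continuous. -/
lemma measurable_of_torus {d : ℕ} (g : Torus d → ℝ)
    (hg : Continuous fun w : Fin d → ℝ => g (torusProj d w)) : Measurable g := by
  haveI : Fact ((0:ℝ) < 1) := ⟨one_pos⟩
  have hl : Measurable (fun y : Torus d => fun i => ((AddCircle.equivIco 1 0 (y i) : ℝ))) :=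
    measurable_pi_lambda _ fun i =>
      measurable_subtype_coe.comp
        ((AddCircle.measurableEquivIco 1 0).measurable.comp (measurable_pi_apply i))
  have hrepr : g = (fun w : Fin d → ℝ => g (torusProj d w)) ∘
      (fun y : Torus d => fun i => ((AddCircle.equivIco 1 0 (y i) : ℝ))) := by
    funext y
    simp only [Function.comp]
    have hpt : torusProj d (fun i => ((AddCircle.equivIco 1 0 (y i) : ℝ))) = y := by
      funext i
      exact (AddCircle.equivIco 1 0).symm_apply_apply (y i)
    rw [hpt]
  rw [hrepr]
  exact hg.measurable.comp hl

lemma abs_le_one_add_sq (t : ℝ) : |t| ≤ 1 + t ^ 2 := by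
  nlinarith [sq_nonneg (|t| - 1), sq_abs t, abs_nonneg t]

/-- Integrability of `λ₂` with respect to any admissible-type measure. -/
lemma lam2_integrable {d : ℕ} (γ : ℝ) (hγ : 0 < γ)
    (b c : (Fin d → ℝ) → Torus d → Fin d → ℝ)
    (σ : (Fin d → ℝ) → Torus d → Matrix (Fin d) (Fin d) ℝ)
    (hbB : ∃ M, ∀ x y i, |b x y i| ≤ M) (hcB : ∃ M, ∀ x y i, |c x y i| ≤ M)
    (hσB : ∃ M, ∀ x y i j, |σ x y i j| ≤ M)
    (hbL : ∃ L : NNReal, ∀ i, LipschitzWith L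
      (fun p : (Fin d → ℝ) × (Fin d → ℝ) => b p.1 (torusProj d p.2) i))
    (hcL : ∃ L : NNReal, ∀ i, LipschitzWith L
      (fun p : (Fin d → ℝ) × (Fin d → ℝ) => c p.1 (torusProj d p.2) i))
    (hσL : ∃ L : NNReal, ∀ i j, LipschitzWith L
      (fun p : (Fin d → ℝ) × (Fin d → ℝ) => σ p.1 (torusProj d p.2) i j))
    (x : Fin d → ℝ) (Q : Measure (Ctrl d × Torus d)) (hQp : IsProbabilityMeasure Q)
    (hQ : Integrable (fun p : Ctrl d × Torus d => ∑ i, (p.1 i) ^ 2) Q) (i : Fin d) :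
    Integrable (fun p : Ctrl d × Torus d => lam2 γ b c σ x p.2 p.1 i) Q := by
  haveI := hQp
  obtain ⟨Mb, hMb⟩ := hbB
  obtain ⟨Mc, hMc⟩ := hcB
  obtain ⟨Mσ, hMσ⟩ := hσB
  obtain ⟨Lb, hLb⟩ := hbL
  obtain ⟨Lc, hLc⟩ := hcL
  obtain ⟨Lσ, hLσ⟩ := hσL
  set y0 : Torus d := torusProj d 0 with hy0
  have hMb0 : 0 ≤ Mb := le_trans (abs_nonneg _) (hMb x y0 i)
  have hMc0 : 0 ≤ Mc := le_trans (abs_nonneg _) (hMc x y0 i)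
  have hMσ0 : 0 ≤ Mσ := le_trans (abs_nonneg _) (hMσ x y0 i i)
  -- measurability
  have mb : Measurable fun y : Torus d => b x y i :=
    measurable_of_torus _ (((hLb i).continuous).comp (Continuous.prodMk_right x))
  have mc : Measurable fun y : Torus d => c x y i :=
    measurable_of_torus _ (((hLc i).continuous).comp (Continuous.prodMk_right x))
  have mσ : ∀ j, Measurable fun y : Torus d => σ x y i j := fun j =>
    measurable_of_torus _ (((hLσ i j).continuous).comp (Continuous.prodMk_right x))
  have hrw : (fun p : Ctrl d × Torus d => lam2 γ b c σ x p.2 p.1 i)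
      = fun p : Ctrl d × Torus d =>
        γ * b x p.2 i + c x p.2 i + ∑ j, σ x p.2 i j * p.1 j := by
    funext p
    simp [lam2, Matrix.mulVec, dotProduct]
  have meas : Measurable (fun p : Ctrl d × Torus d => lam2 γ b c σ x p.2 p.1 i) := by
    rw [hrw]
    exact ((measurable_const.mul (mb.comp measurable_snd)).add
      (mc.comp measurable_snd)).add
      (Finset.measurable_sum _ fun j _ =>
        ((mσ j).comp measurable_snd).mul ((measurable_pi_apply j).comp measurable_fst))
  -- the dominating function
  have hbound : Integrable
      (fun p : Ctrl d × Torus d => (γ * Mb + Mc + d * Mσ) + Mσ * ∑ j, (p.1 j) ^ 2) Q :=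
    (integrable_const _).add (hQ.const_mul Mσ)
  refine hbound.mono meas.aestronglyMeasurable (Filter.Eventually.of_forall fun p => ?_)
  have hsum : |∑ j, σ x p.2 i j * p.1 j| ≤ Mσ * ((d : ℝ) + ∑ j, (p.1 j) ^ 2) := by
    calc |∑ j, σ x p.2 i j * p.1 j| ≤ ∑ j, |σ x p.2 i j * p.1 j| :=
          Finset.abs_sum_le_sum_abs _ _
      _ ≤ ∑ j, Mσ * (1 + (p.1 j) ^ 2) := by
          refine Finset.sum_le_sum fun j _ => ?_
          rw [abs_mul]
          exact mul_le_mul (hMσ x p.2 i j) (abs_le_one_add_sq _) (abs_nonneg _) hMσ0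
      _ = Mσ * ((d : ℝ) + ∑ j, (p.1 j) ^ 2) := by
          rw [← Finset.mul_sum, Finset.sum_add_distrib, Finset.sum_const, Finset.card_univ,
            Fintype.card_fin, nsmul_eq_mul, mul_one]
  have hval : |lam2 γ b c σ x p.2 p.1 i| ≤
      (γ * Mb + Mc + d * Mσ) + Mσ * ∑ j, (p.1 j) ^ 2 := by
    have : lam2 γ b c σ x p.2 p.1 i
        = γ * b x p.2 i + c x p.2 i + ∑ j, σ x p.2 i j * p.1 j := congrFun hrw p
    rw [this]
    have h1 : |γ * b x p.2 i| ≤ γ * Mb := by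
      rw [abs_mul, abs_of_pos hγ]
      exact mul_le_mul_of_nonneg_left (hMb x p.2 i) hγ.le
    have h2 : |c x p.2 i| ≤ Mc := hMc x p.2 i
    calc |γ * b x p.2 i + c x p.2 i + ∑ j, σ x p.2 i j * p.1 j|
        ≤ |γ * b x p.2 i + c x p.2 i| + |∑ j, σ x p.2 i j * p.1 j| := abs_add_le _ _
      _ ≤ (|γ * b x p.2 i| + |c x p.2 i|) + Mσ * ((d : ℝ) + ∑ j, (p.1 j) ^ 2) :=
          add_le_add (abs_add_le _ _) hsum
      _ ≤ (γ * Mb + Mc) + Mσ * ((d : ℝ) + ∑ j, (p.1 j) ^ 2) :=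
          add_le_add (add_le_add h1 h2) le_rfl
      _ = (γ * Mb + Mc + d * Mσ) + Mσ * ∑ j, (p.1 j) ^ 2 := by ring
  rw [Real.norm_eq_abs, Real.norm_eq_abs]
  exact hval.trans (le_abs_self _)

/-- Key mixture estimate. -/
lemma L2r_mix_le {d : ℕ} (γ : ℝ) (hγ : 0 < γ)
    (b c : (Fin d → ℝ) → Torus d → Fin d → ℝ)
    (σ : (Fin d → ℝ) → Torus d → Matrix (Fin d) (Fin d) ℝ)
    (hbB : ∃ M, ∀ x y i, |b x y i| ≤ M) (hcB : ∃ M, ∀ x y i, |c x y i| ≤ M)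
    (hσB : ∃ M, ∀ x y i j, |σ x y i j| ≤ M)
    (hbL : ∃ L : NNReal, ∀ i, LipschitzWith L
      (fun p : (Fin d → ℝ) × (Fin d → ℝ) => b p.1 (torusProj d p.2) i))
    (hcL : ∃ L : NNReal, ∀ i, LipschitzWith L
      (fun p : (Fin d → ℝ) × (Fin d → ℝ) => c p.1 (torusProj d p.2) i))
    (hσL : ∃ L : NNReal, ∀ i j, LipschitzWith L
      (fun p : (Fin d → ℝ) × (Fin d → ℝ) => σ p.1 (torusProj d p.2) i j))
    (x β₁ β₂ : Fin d → ℝ) (η : ℝ) (hη0 : 0 < η) (hη1 : η < 1)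
    (P₁ P₂ : Measure (Ctrl d × Torus d))
    (h1 : P₁ ∈ A2 γ b c σ x β₁) (h2 : P₂ ∈ A2 γ b c σ x β₂) :
    L2r γ b c σ x (η • β₁ + (1 - η) • β₂) ≤
      ENNReal.ofReal η * ENNReal.ofReal ((1 / 2) * ∫ p, ∑ i, (p.1 i) ^ 2 ∂P₁) +
      ENNReal.ofReal (1 - η) * ENNReal.ofReal ((1 / 2) * ∫ p, ∑ i, (p.1 i) ^ 2 ∂P₂) := by
  obtain ⟨h1p, h1i, h1g, h1l⟩ := h1
  obtain ⟨h2p, h2i, h2g, h2l⟩ := h2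
  have hη1' : 0 < 1 - η := by linarith
  set a1 : ENNReal := ENNReal.ofReal η with ha1
  set a2 : ENNReal := ENNReal.ofReal (1 - η) with ha2
  have ha1t : a1 ≠ ⊤ := ENNReal.ofReal_ne_top
  have ha2t : a2 ≠ ⊤ := ENNReal.ofReal_ne_top
  have ha10 : a1 ≠ 0 := (ENNReal.ofReal_pos.mpr hη0).ne'
  have ha20 : a2 ≠ 0 := (ENNReal.ofReal_pos.mpr hη1').ne'
  set P : Measure (Ctrl d × Torus d) := a1 • P₁ + a2 • P₂ with hP
  haveI := h1p
  haveI := h2p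
  have hPuniv : P Set.univ = 1 := by
    simp only [hP, Measure.add_apply, Measure.smul_apply, smul_eq_mul, measure_univ,
      mul_one, ha1, ha2]
    rw [← ENNReal.ofReal_add hη0.le hη1'.le]
    norm_num
  have hPprob : IsProbabilityMeasure P := ⟨hPuniv⟩
  have hIntP : ∀ {f : Ctrl d × Torus d → ℝ}, Integrable f P₁ → Integrable f P₂ →
      Integrable f P := fun hf1 hf2 => (hf1.smul_measure ha1t).add_measure (hf2.smul_measure ha2t)
  have hIntegralP : ∀ (f : Ctrl d × Torus d → ℝ), Integrable f P₁ → Integrable f P₂ →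
      ∫ p, f p ∂P = η * ∫ p, f p ∂P₁ + (1 - η) * ∫ p, f p ∂P₂ := by
    intro f hf1 hf2
    rw [hP, integral_add_measure (hf1.smul_measure ha1t) (hf2.smul_measure ha2t),
      integral_smul_measure, integral_smul_measure]
    simp [ha1, ha2, ENNReal.toReal_ofReal hη0.le, ENNReal.toReal_ofReal hη1'.le, smul_eq_mul]
  have hlam1 : ∀ i, Integrable (fun p : Ctrl d × Torus d => lam2 γ b c σ x p.2 p.1 i) P₁ :=
    lam2_integrable γ hγ b c σ hbB hcB hσB hbL hcL hσL x P₁ h1p h1i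
  have hlam2' : ∀ i, Integrable (fun p : Ctrl d × Torus d => lam2 γ b c σ x p.2 p.1 i) P₂ :=
    lam2_integrable γ hγ b c σ hbB hcB hσB hbL hcL hσL x P₂ h2p h2i
  have hPmem : P ∈ A2 γ b c σ x (η • β₁ + (1 - η) • β₂) := by
    refine ⟨hPprob, hIntP h1i h2i, ?_, ?_⟩
    · intro F hF g hg
      by_cases hg' : Integrable g P
      · rw [hP] at hg'
        obtain ⟨hgs1, hgs2⟩ := integrable_add_measure.mp hg'
        have hg1 : Integrable g P₁ := (integrable_smul_measure ha10 ha1t).mp hgs1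
        have hg2 : Integrable g P₂ := (integrable_smul_measure ha20 ha2t).mp hgs2
        rw [hIntegralP g hg1 hg2, h1g F hF g hg, h2g F hF g hg]
        ring
      · exact integral_undef hg'
    · intro i
      rw [hIntegralP _ (hlam1 i) (hlam2' i), h1l i, h2l i]
      simp [smul_eq_mul]
  have hco1 : (0:ℝ) ≤ ∫ p, ∑ i, (p.1 i) ^ 2 ∂P₁ :=
    integral_nonneg fun p => Finset.sum_nonneg fun i _ => sq_nonneg _
  have hco2 : (0:ℝ) ≤ ∫ p, ∑ i, (p.1 i) ^ 2 ∂P₂ :=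
    integral_nonneg fun p => Finset.sum_nonneg fun i _ => sq_nonneg _
  calc L2r γ b c σ x (η • β₁ + (1 - η) • β₂)
      ≤ ENNReal.ofReal ((1 / 2) * ∫ p, ∑ i, (p.1 i) ^ 2 ∂P) :=
        iInf_le_of_le P (iInf_le _ hPmem)
    _ = a1 * ENNReal.ofReal ((1 / 2) * ∫ p, ∑ i, (p.1 i) ^ 2 ∂P₁) +
        a2 * ENNReal.ofReal ((1 / 2) * ∫ p, ∑ i, (p.1 i) ^ 2 ∂P₂) := by
        rw [hIntegralP _ h1i h2i]
        rw [show (1/2:ℝ) * (η * (∫ p, ∑ i, (p.1 i) ^ 2 ∂P₁)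
            + (1 - η) * ∫ p, ∑ i, (p.1 i) ^ 2 ∂P₂)
          = η * ((1/2) * ∫ p, ∑ i, (p.1 i) ^ 2 ∂P₁)
            + (1 - η) * ((1/2) * ∫ p, ∑ i, (p.1 i) ^ 2 ∂P₂) by ring]
        rw [ENNReal.ofReal_add (mul_nonneg hη0.le (by linarith))
          (mul_nonneg hη1'.le (by linarith)),
          ENNReal.ofReal_mul hη0.le, ENNReal.ofReal_mul hη1'.le]

end Aux

/-- **Convexity of the Regime 2 local rate function** (Lemma on convexity).
For fixed `x`, the function `β ↦ L₂^r(x,β)` is convex: for `β₁, β₂ ∈ ℝ^d` and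
`η ∈ [0,1]`,
`L₂^r(x, ηβ₁ + (1−η)β₂) ≤ η L₂^r(x,β₁) + (1−η) L₂^r(x,β₂)`. -/
theorem L2r_convex {d : ℕ} (hd : 1 ≤ d) (γ : ℝ) (hγ : 0 < γ)
    (b c : (Fin d → ℝ) → Torus d → Fin d → ℝ)
    (σ : (Fin d → ℝ) → Torus d → Matrix (Fin d) (Fin d) ℝ)
    -- boundedness of the coefficients
    (hbB : ∃ M, ∀ x y i, |b x y i| ≤ M) (hcB : ∃ M, ∀ x y i, |c x y i| ≤ M)
    (hσB : ∃ M, ∀ x y i j, |σ x y i j| ≤ M)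
    -- Lipschitz continuity of the coefficients (via periodic representatives)
    (hbL : ∃ L : NNReal, ∀ i, LipschitzWith L
      (fun p : (Fin d → ℝ) × (Fin d → ℝ) => b p.1 (torusProj d p.2) i))
    (hcL : ∃ L : NNReal, ∀ i, LipschitzWith L
      (fun p : (Fin d → ℝ) × (Fin d → ℝ) => c p.1 (torusProj d p.2) i))
    (hσL : ∃ L : NNReal, ∀ i j, LipschitzWith L
      (fun p : (Fin d → ℝ) × (Fin d → ℝ) => σ p.1 (torusProj d p.2) i j))
    -- uniform nondegeneracy of `σσᵀ`
    (hnd : ∃ θ > (0 : ℝ), ∀ x y (ξ : Fin d → ℝ),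
      θ * ∑ i, (ξ i) ^ 2 ≤ ξ ⬝ᵥ (σ x y * (σ x y)ᵀ).mulVec ξ)
    (x : Fin d → ℝ) :
    ∀ (β₁ β₂ : Fin d → ℝ) (η : ℝ), 0 ≤ η → η ≤ 1 →
      L2r γ b c σ x (η • β₁ + (1 - η) • β₂) ≤
        ENNReal.ofReal η * L2r γ b c σ x β₁ + ENNReal.ofReal (1 - η) * L2r γ b c σ x β₂  := by
  intro β₁ β₂ η hη0 hη1
  rcases eq_or_lt_of_le hη0 with h0 | h0
  · rw [← h0]
    simp
  rcases eq_or_lt_of_le hη1 with h1 | h1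
  · rw [h1]
    simp
  by_cases hA1 : ∃ P, P ∈ A2 γ b c σ x β₁
  swap
  · have hL1 : L2r γ b c σ x β₁ = ⊤ :=
      iInf_eq_top.mpr fun P => iInf_neg fun h => hA1 ⟨P, h⟩
    rw [hL1, ENNReal.mul_top (ENNReal.ofReal_pos.mpr h0).ne', top_add]
    exact le_top
  by_cases hA2 : ∃ P, P ∈ A2 γ b c σ x β₂
  swap
  · have hL2 : L2r γ b c σ x β₂ = ⊤ :=
      iInf_eq_top.mpr fun P => iInf_neg fun h => hA2 ⟨P, h⟩
    rw [hL2, ENNReal.mul_top (ENNReal.ofReal_pos.mpr (by linarith : (0:ℝ) < 1 - η)).ne',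
      add_top]
    exact le_top
  obtain ⟨P₁, hP₁⟩ := hA1
  obtain ⟨P₂, hP₂⟩ := hA2
  have hL1fin : L2r γ b c σ x β₁ < ⊤ :=
    lt_of_le_of_lt (iInf_le_of_le P₁ (iInf_le _ hP₁)) ENNReal.ofReal_lt_top
  have hL2fin : L2r γ b c σ x β₂ < ⊤ :=
    lt_of_le_of_lt (iInf_le_of_le P₂ (iInf_le _ hP₂)) ENNReal.ofReal_lt_top
  refine ENNReal.le_of_forall_pos_le_add fun ε hε _ => ?_
  have hεne : (ε : ENNReal) ≠ 0 := by exact_mod_cast hε.ne'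
  have h1' : L2r γ b c σ x β₁ < L2r γ b c σ x β₁ + ε :=
    ENNReal.lt_add_right hL1fin.ne hεne
  have h2' : L2r γ b c σ x β₂ < L2r γ b c σ x β₂ + ε :=
    ENNReal.lt_add_right hL2fin.ne hεne
  rw [show L2r γ b c σ x β₁ = ⨅ (P : Measure (Ctrl d × Torus d)) (_ : P ∈ A2 γ b c σ x β₁),
      ENNReal.ofReal ((1 / 2) * ∫ p, ∑ i, (p.1 i) ^ 2 ∂P) from rfl, iInf_lt_iff] at h1'
  obtain ⟨Q₁, h1''⟩ := h1'
  rw [iInf_lt_iff] at h1''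
  obtain ⟨hQ₁mem, hQ₁⟩ := h1''
  rw [show L2r γ b c σ x β₂ = ⨅ (P : Measure (Ctrl d × Torus d)) (_ : P ∈ A2 γ b c σ x β₂),
      ENNReal.ofReal ((1 / 2) * ∫ p, ∑ i, (p.1 i) ^ 2 ∂P) from rfl, iInf_lt_iff] at h2'
  obtain ⟨Q₂, h2''⟩ := h2'
  rw [iInf_lt_iff] at h2''
  obtain ⟨hQ₂mem, hQ₂⟩ := h2''
  have ha12 : ENNReal.ofReal η + ENNReal.ofReal (1 - η) = 1 := by
    rw [← ENNReal.ofReal_add h0.le (by linarith)]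
    norm_num
  calc L2r γ b c σ x (η • β₁ + (1 - η) • β₂)
      ≤ ENNReal.ofReal η * ENNReal.ofReal ((1 / 2) * ∫ p, ∑ i, (p.1 i) ^ 2 ∂Q₁) +
        ENNReal.ofReal (1 - η) * ENNReal.ofReal ((1 / 2) * ∫ p, ∑ i, (p.1 i) ^ 2 ∂Q₂) :=
        L2r_mix_le γ hγ b c σ hbB hcB hσB hbL hcL hσL x β₁ β₂ η h0 h1 Q₁ Q₂ hQ₁mem hQ₂mem
    _ ≤ ENNReal.ofReal η * (L2r γ b c σ x β₁ + ε) +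
        ENNReal.ofReal (1 - η) * (L2r γ b c σ x β₂ + ε) :=
        add_le_add (mul_le_mul_right hQ₁.le _) (mul_le_mul_right hQ₂.le _)
    _ = (ENNReal.ofReal η * L2r γ b c σ x β₁ + ENNReal.ofReal (1 - η) * L2r γ b c σ x β₂) +
        (ENNReal.ofReal η + ENNReal.ofReal (1 - η)) * ε := by ring
    _ = ENNReal.ofReal η * L2r γ b c σ x β₁ + ENNReal.ofReal (1 - η) * L2r γ b c σ x β₂ + ε := by
        rw [ha12, one_mul]
end

section
/- Fix x ∈ ℝ^d and assume that L₂^r(x, ·) is finite everywhere on ℝ^d. Let B² be the union over β′ ∈ ℝ^d of the sets A²_{x,β′}, i.e. the set of Borel probability measures P on ℝ^d × 𝕋^d with ∫‖z‖² dP < ∞ and ∫ ℒ²_{z,x} f(y) P(dz dy) = 0 for all f ∈ C²(𝕋^d). For ζ ∈ ℝ^d define L̃₂(ζ) = inf_{P ∈ B²} ∫ [ (1/2)‖z‖² − ζ·(γ b(x,y) + c(x,y) + σ(x,y)z) ] P(dz dy). Then for every β ∈ ℝ^d and every ζ_β in the subdifferential ∂L₂^r(x,·)(β) (i.e. L₂^r(x,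 β′) − L₂^r(x, β) ≥ ζ_β·(β′ − β) for all β′), one has L̃₂(ζ_β) = L₂^r(x, β) − ζ_β·β. -/
open MeasureTheory Matrix Filter

/-- `B²`: the union over `β′` of the sets `A²_{x,β′}`, i.e. probability measures on
`ℝ^d × 𝕋^d` with finite second moment annihilating the generator `ℒ²_{z,x}`. -/
def B2 {d : ℕ} (γ : ℝ) (b c : (Fin d → ℝ) → Torus d → Fin d → ℝ)
    (σ : (Fin d → ℝ) → Torus d → Matrix (Fin d) (Fin d) ℝ)
    (x : Fin d → ℝ) : Set (Measure (Ctrl d × Torus d)) :=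
  {P | IsProbabilityMeasure P ∧
    Integrable (fun p : Ctrl d × Torus d => ∑ i, (p.1 i) ^ 2) P ∧
    (∀ F : (Fin d → ℝ) → ℝ, IsC2Periodic F →
      ∀ g : Ctrl d × Torus d → ℝ,
        (∀ (z : Ctrl d) (w : Fin d → ℝ), g (z, torusProj d w) = gen2 γ b c σ x z F w) →
        ∫ p, g p ∂P = 0)}

/-- `L̃₂(ζ) = inf_{P ∈ B²} ∫ [ (1/2)‖z‖² − ζ·(γb + c + σz) ] dP`. -/
noncomputable def Ltilde2 {d : ℕ} (γ : ℝ) (b c : (Fin d → ℝ) → Torus d → Fin d → ℝ)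
    (σ : (Fin d → ℝ) → Torus d → Matrix (Fin d) (Fin d) ℝ)
    (x ζ : Fin d → ℝ) : ℝ :=
  sInf {r : ℝ | ∃ P ∈ B2 γ b c σ x,
    r = ∫ p, ((1 / 2) * ∑ i, (p.1 i) ^ 2 - ζ ⬝ᵥ lam2 γ b c σ x p.2 p.1) ∂P}


section Helpers

open MeasureTheory Matrix Filter

lemma measurable_of_comp_torusProj {d : ℕ} {f : Torus d → ℝ}
    (hf : Measurable fun w : Fin d → ℝ => f (torusProj d w)) : Measurable f := by
  haveI : Fact ((0:ℝ) < 1) := ⟨one_pos⟩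
  set s : Torus d → (Fin d → ℝ) :=
    fun y i => ((AddCircle.equivIoc 1 0 (y i) : Set.Ioc (0:ℝ) (0+1)) : ℝ) with hs_def
  have hs : Measurable s := measurable_pi_lambda _ fun i =>
    measurable_subtype_coe.comp
      ((AddCircle.measurableEquivIoc 1 0).measurable.comp (measurable_pi_apply i))
  have hsec : ∀ y, torusProj d (s y) = y := by
    intro y; funext i
    exact (AddCircle.equivIoc 1 0).symm_apply_apply (y i)
  have : f = (fun w => f (torusProj d w)) ∘ s := by
    funext y; simp [Function.comp, hsec]
  rw [this]; exact hf.comp hs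

lemma measurable_lam2 {d : ℕ} (γ : ℝ) (b c : (Fin d → ℝ) → Torus d → Fin d → ℝ)
    (σ : (Fin d → ℝ) → Torus d → Matrix (Fin d) (Fin d) ℝ)
    (hbL : ∃ L : NNReal, ∀ i, LipschitzWith L
      (fun p : (Fin d → ℝ) × (Fin d → ℝ) => b p.1 (torusProj d p.2) i))
    (hcL : ∃ L : NNReal, ∀ i, LipschitzWith L
      (fun p : (Fin d → ℝ) × (Fin d → ℝ) => c p.1 (torusProj d p.2) i))
    (hσL : ∃ L : NNReal, ∀ i j, LipschitzWith L
      (fun p : (Fin d → ℝ) × (Fin d → ℝ) => σ p.1 (torusProj d p.2) i j))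
    (x : Fin d → ℝ) (i : Fin d) :
    Measurable (fun p : Ctrl d × Torus d => lam2 γ b c σ x p.2 p.1 i) := by
  obtain ⟨Lb, hLb⟩ := hbL
  obtain ⟨Lc, hLc⟩ := hcL
  obtain ⟨Lσ, hLσ⟩ := hσL
  have mb : ∀ k, Measurable (fun y : Torus d => b x y k) := fun k =>
    measurable_of_comp_torusProj
      (((hLb k).comp (LipschitzWith.prodMk_left x)).continuous.measurable)
  have mc : ∀ k, Measurable (fun y : Torus d => c x y k) := fun k =>
    measurable_of_comp_torusProj
      (((hLc k).comp (LipschitzWith.prodMk_left x)).continuous.measurable)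
  have mσ : ∀ k j, Measurable (fun y : Torus d => σ x y k j) := fun k j =>
    measurable_of_comp_torusProj
      (((hLσ k j).comp (LipschitzWith.prodMk_left x)).continuous.measurable)
  have e : (fun p : Ctrl d × Torus d => lam2 γ b c σ x p.2 p.1 i) =
      fun p => γ * b x p.2 i + c x p.2 i + ∑ j, σ x p.2 i j * p.1 j := by
    funext p; simp [lam2, Matrix.mulVec, dotProduct]
  rw [e]
  exact ((((mb i).comp measurable_snd).const_mul γ).add
      ((mc i).comp measurable_snd)).add
    (Finset.measurable_sum _ fun j _ =>
      ((mσ i j).comp measurable_snd).mul ((measurable_pi_apply j).comp measurable_fst))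

lemma integrable_lam2 {d : ℕ} (γ : ℝ) (b c : (Fin d → ℝ) → Torus d → Fin d → ℝ)
    (σ : (Fin d → ℝ) → Torus d → Matrix (Fin d) (Fin d) ℝ)
    (hbB : ∃ M, ∀ x y i, |b x y i| ≤ M) (hcB : ∃ M, ∀ x y i, |c x y i| ≤ M)
    (hσB : ∃ M, ∀ x y i j, |σ x y i j| ≤ M)
    (hbL : ∃ L : NNReal, ∀ i, LipschitzWith L
      (fun p : (Fin d → ℝ) × (Fin d → ℝ) => b p.1 (torusProj d p.2) i))
    (hcL : ∃ L : NNReal, ∀ i, LipschitzWith L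
      (fun p : (Fin d → ℝ) × (Fin d → ℝ) => c p.1 (torusProj d p.2) i))
    (hσL : ∃ L : NNReal, ∀ i j, LipschitzWith L
      (fun p : (Fin d → ℝ) × (Fin d → ℝ) => σ p.1 (torusProj d p.2) i j))
    (x : Fin d → ℝ) (P : Measure (Ctrl d × Torus d)) [IsProbabilityMeasure P]
    (h2 : Integrable (fun p : Ctrl d × Torus d => ∑ i, (p.1 i) ^ 2) P) (i : Fin d) :
    Integrable (fun p : Ctrl d × Torus d => lam2 γ b c σ x p.2 p.1 i) P := by
  obtain ⟨Mb, hMb⟩ := hbB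
  obtain ⟨Mc, hMc⟩ := hcB
  obtain ⟨Mσ, hMσ⟩ := hσB
  have hz : ∀ j, Integrable (fun p : Ctrl d × Torus d => p.1 j) P := by
    intro j
    refine ((integrable_const (1:ℝ)).add h2).mono'
      (((measurable_pi_apply j).comp measurable_fst).aestronglyMeasurable)
      (Eventually.of_forall fun p => ?_)
    have h1 : (p.1 j)^2 ≤ ∑ k, (p.1 k)^2 :=
      Finset.single_le_sum (f := fun k => (p.1 k)^2) (fun k _ => sq_nonneg _)
        (Finset.mem_univ j)
    rw [Real.norm_eq_abs]
    show |p.1 j| ≤ 1 + ∑ k, (p.1 k)^2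
    nlinarith [sq_nonneg (|p.1 j| - 1), sq_abs (p.1 j)]
  refine Integrable.mono' (g := fun p : Ctrl d × Torus d => |γ| * Mb + Mc + ∑ j, Mσ * |p.1 j|)
    ((integrable_const _).add (integrable_finset_sum _ fun j _ => ((hz j).abs.const_mul Mσ)))
    ((measurable_lam2 γ b c σ hbL hcL hσL x i).aestronglyMeasurable)
    (Eventually.of_forall fun p => ?_)
  rw [Real.norm_eq_abs]
  have e : lam2 γ b c σ x p.2 p.1 i
      = γ * b x p.2 i + c x p.2 i + ∑ j, σ x p.2 i j * p.1 j := by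
    simp [lam2, Matrix.mulVec, dotProduct]
  rw [e]
  calc |γ * b x p.2 i + c x p.2 i + ∑ j, σ x p.2 i j * p.1 j|
      ≤ |γ * b x p.2 i| + |c x p.2 i| + |∑ j, σ x p.2 i j * p.1 j| := abs_add_three _ _ _
    _ ≤ |γ| * Mb + Mc + ∑ j, Mσ * |p.1 j| := by
        refine add_le_add (add_le_add ?_ (hMc _ _ _)) ?_
        · rw [abs_mul]
          exact mul_le_mul_of_nonneg_left (hMb _ _ _) (abs_nonneg γ)
        · refine (Finset.abs_sum_le_sum_abs _ _).trans (Finset.sum_le_sum fun j _ => ?_)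
          rw [abs_mul]
          exact mul_le_mul_of_nonneg_right (hMσ _ _ _ _) (abs_nonneg _)

lemma integral_split_lam2 {d : ℕ} (γ : ℝ) (b c : (Fin d → ℝ) → Torus d → Fin d → ℝ)
    (σ : (Fin d → ℝ) → Torus d → Matrix (Fin d) (Fin d) ℝ)
    (x ζ : Fin d → ℝ) (P : Measure (Ctrl d × Torus d)) [IsProbabilityMeasure P]
    (h2 : Integrable (fun p : Ctrl d × Torus d => ∑ i, (p.1 i) ^ 2) P)
    (hlam : ∀ i, Integrable (fun p : Ctrl d × Torus d => lam2 γ b c σ x p.2 p.1 i) P) :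
    ∫ p, ((1 / 2) * ∑ i, (p.1 i) ^ 2 - ζ ⬝ᵥ lam2 γ b c σ x p.2 p.1) ∂P =
      (1 / 2) * (∫ p, ∑ i, (p.1 i) ^ 2 ∂P)
        - ζ ⬝ᵥ (fun i => ∫ p, lam2 γ b c σ x p.2 p.1 i ∂P) := by
  have hgeq : (fun p : Ctrl d × Torus d => ζ ⬝ᵥ lam2 γ b c σ x p.2 p.1)
      = fun p => ∑ i, ζ i * lam2 γ b c σ x p.2 p.1 i := by
    funext p; simp [dotProduct]
  have hgint : Integrable (fun p : Ctrl d × Torus d => ζ ⬝ᵥ lam2 γ b c σ x p.2 p.1) P := by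
    rw [hgeq]; exact integrable_finset_sum _ fun i _ => (hlam i).const_mul (ζ i)
  rw [integral_sub (h2.const_mul _) hgint, integral_const_mul, hgeq,
    integral_finset_sum _ fun i _ => (hlam i).const_mul (ζ i)]
  congr 1
  simp only [dotProduct]
  exact Finset.sum_congr rfl fun i _ => integral_const_mul _ _

end Helpers

/-- **Lagrange-multiplier identity for the Regime 2 local rate function.**
If `L₂^r(x,·)` is finite everywhere, then for every `β` and every `ζ_β` in the
subdifferential of `L₂^r(x,·)` at `β`, one has `L̃₂(ζ_β) = L₂^r(x,β) − ζ_β·β`. -/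
theorem Ltilde2_eq_L2r_sub_inner {d : ℕ} (hd : 1 ≤ d) (γ : ℝ) (hγ : 0 < γ)
    (b c : (Fin d → ℝ) → Torus d → Fin d → ℝ)
    (σ : (Fin d → ℝ) → Torus d → Matrix (Fin d) (Fin d) ℝ)
    -- boundedness of the coefficients
    (hbB : ∃ M, ∀ x y i, |b x y i| ≤ M) (hcB : ∃ M, ∀ x y i, |c x y i| ≤ M)
    (hσB : ∃ M, ∀ x y i j, |σ x y i j| ≤ M)
    -- Lipschitz continuity of the coefficients (via periodic representatives)
    (hbL : ∃ L : NNReal, ∀ i, LipschitzWith L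
      (fun p : (Fin d → ℝ) × (Fin d → ℝ) => b p.1 (torusProj d p.2) i))
    (hcL : ∃ L : NNReal, ∀ i, LipschitzWith L
      (fun p : (Fin d → ℝ) × (Fin d → ℝ) => c p.1 (torusProj d p.2) i))
    (hσL : ∃ L : NNReal, ∀ i j, LipschitzWith L
      (fun p : (Fin d → ℝ) × (Fin d → ℝ) => σ p.1 (torusProj d p.2) i j))
    -- uniform nondegeneracy of `σσᵀ`
    (hnd : ∃ θ > (0 : ℝ), ∀ x y (ξ : Fin d → ℝ),
      θ * ∑ i, (ξ i) ^ 2 ≤ ξ ⬝ᵥ (σ x y * (σ x y)ᵀ).mulVec ξ)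
    (x : Fin d → ℝ)
    -- `L₂^r(x,·)` is finite everywhere
    (hfin : ∀ β, L2r γ b c σ x β < ⊤)
    (β ζβ : Fin d → ℝ)
    -- `ζ_β` belongs to the subdifferential of `L₂^r(x,·)` at `β`
    (hsub : ∀ β' : Fin d → ℝ,
      ζβ ⬝ᵥ (β' - β) ≤ (L2r γ b c σ x β').toReal - (L2r γ b c σ x β).toReal) :
    Ltilde2 γ b c σ x ζβ = (L2r γ b c σ x β).toReal - ζβ ⬝ᵥ β  := by
  classical
  set S : Set ℝ := {r : ℝ | ∃ P ∈ B2 γ b c σ x,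
    r = ∫ p, ((1 / 2) * ∑ i, (p.1 i) ^ 2 - ζβ ⬝ᵥ lam2 γ b c σ x p.2 p.1) ∂P} with hS
  have hLt : Ltilde2 γ b c σ x ζβ = sInf S := rfl
  have hhalf : ∀ P : Measure (Ctrl d × Torus d),
      0 ≤ (1/2:ℝ) * ∫ p, ∑ i, (p.1 i)^2 ∂P := fun P =>
    mul_nonneg one_half_pos.le
      (integral_nonneg fun p => Finset.sum_nonneg fun i _ => sq_nonneg _)
  have hlb : ∀ r ∈ S, (L2r γ b c σ x β).toReal - ζβ ⬝ᵥ β ≤ r := by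
    rintro r ⟨P, hPB, rfl⟩
    obtain ⟨hprob, h2, hgen⟩ := hPB
    haveI := hprob
    have hlam : ∀ i, Integrable (fun p : Ctrl d × Torus d => lam2 γ b c σ x p.2 p.1 i) P :=
      integrable_lam2 γ b c σ hbB hcB hσB hbL hcL hσL x P h2
    have hsplit := integral_split_lam2 γ b c σ x ζβ P h2 hlam
    set β' : Fin d → ℝ := fun i => ∫ p, lam2 γ b c σ x p.2 p.1 i ∂P with hβ'
    have hmem : P ∈ A2 γ b c σ x β' := ⟨hprob, h2, hgen, fun i => rfl⟩
    have hle : L2r γ b c σ x β' ≤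
        ENNReal.ofReal ((1/2) * ∫ p, ∑ i, (p.1 i)^2 ∂P) := by
      rw [L2r]; exact iInf₂_le P hmem
    have hle' : (L2r γ b c σ x β').toReal ≤ (1/2) * ∫ p, ∑ i, (p.1 i)^2 ∂P :=
      ENNReal.toReal_le_of_le_ofReal (hhalf P) hle
    have hsb := hsub β'
    rw [dotProduct_sub] at hsb
    rw [hsplit]
    linarith
  have hbdd : BddBelow S := ⟨_, fun r hr => hlb r hr⟩
  have hAne : ∃ P, P ∈ A2 γ b c σ x β := by
    by_contra h
    push_neg at h
    have : L2r γ b c σ x β = ⊤ := by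
      rw [L2r, iInf_eq_top]
      intro P
      rw [iInf_eq_top]
      intro hP'
      exact absurd hP' (h P)
    exact (hfin β).ne this
  obtain ⟨P₀, hP₀⟩ := hAne
  have hP₀B : P₀ ∈ B2 γ b c σ x := ⟨hP₀.1, hP₀.2.1, hP₀.2.2.1⟩
  have hSne : S.Nonempty := ⟨_, P₀, hP₀B, rfl⟩
  rw [hLt]
  refine le_antisymm ?_ (le_csInf hSne hlb)
  refine le_of_forall_pos_le_add fun ε hε => ?_
  have hlt : L2r γ b c σ x β < L2r γ b c σ x β + ENNReal.ofReal ε :=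
    ENNReal.lt_add_right (hfin β).ne (ENNReal.ofReal_pos.mpr hε).ne'
  conv_lhs at hlt => rw [L2r]
  obtain ⟨P, hP⟩ := iInf_lt_iff.mp hlt
  obtain ⟨hPA, hPlt⟩ := iInf_lt_iff.mp hP
  haveI := hPA.1
  have h0 := hhalf P
  have hval : (1/2:ℝ) * ∫ p, ∑ i, (p.1 i)^2 ∂P < (L2r γ b c σ x β).toReal + ε := by
    have h1 := ENNReal.toReal_strict_mono
      (ENNReal.add_ne_top.mpr ⟨(hfin β).ne, ENNReal.ofReal_ne_top⟩) hPlt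
    rwa [ENNReal.toReal_ofReal h0, ENNReal.toReal_add (hfin β).ne ENNReal.ofReal_ne_top,
      ENNReal.toReal_ofReal hε.le] at h1
  have hlam : ∀ i, Integrable (fun p : Ctrl d × Torus d => lam2 γ b c σ x p.2 p.1 i) P :=
    integrable_lam2 γ b c σ hbB hcB hσB hbL hcL hσL x P hPA.2.1
  have hsplit := integral_split_lam2 γ b c σ x ζβ P hPA.2.1 hlam
  have hβ : (fun i => ∫ p, lam2 γ b c σ x p.2 p.1 i ∂P) = β :=
    funext fun i => hPA.2.2.2 i
  rw [hβ] at hsplit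
  have hmemS : (∫ p, ((1/2) * ∑ i, (p.1 i)^2 - ζβ ⬝ᵥ lam2 γ b c σ x p.2 p.1) ∂P) ∈ S :=
    ⟨P, ⟨hPA.1, hPA.2.1, hPA.2.2.1⟩, rfl⟩
  calc sInf S ≤ _ := csInf_le hbdd hmemS
    _ = (1/2) * (∫ p, ∑ i, (p.1 i)^2 ∂P) - ζβ ⬝ᵥ β := hsplit
    _ ≤ (L2r γ b c σ x β).toReal - ζβ ⬝ᵥ β + ε := by linarith
end

section
/- Let L : ℝ^m × ℝ^d → ℝ be such that for each x ∈ ℝ^m the function L(x, ·) : ℝ^d → ℝ is convex. Let x_n → x in ℝ^m and suppose that for every γ ∈ ℝ^d there exists a sequence γ_n → γ with limsup_{n→∞} L(x_n, γ_n) ≤ L(x, γ). Then for every β ∈ ℝ^d and every sequence β_n → β one has limsup_{n→∞} L(x_n, β_n) ≤ L(x, β). -/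
/-!
Fix `β` and a sequence `βₙ → β`; we build approximants `γₙ → β` with `L(xₙ, γₙ) ≤ L(x, β) + ε`
that agree with `βₙ` in more and more coordinates. To free coordinate `k`, pick `u < β k < v`
with `L(x, ·)` still below the bound at `β` with its `k`-th entry replaced by `u` resp. `v`
(continuity of the convex function `L(x, ·)`), approximate these two points, and take the
point on the segment between the two approximants whose `k`-th coordinate is that of `βₙ`.
Convexity of `L(xₙ, ·)` bounds its value there by the larger endpoint value.
Once all coordinates are freed, `γₙ = βₙ` eventually.
-/

open Filter Set Topology AffineMap Function

section
variable {α : Type*} {l : Filter α}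

theorem eventually_lineMap_div_eq {u v p : α → ℝ} {u₀ v₀ p₀ : ℝ}
    (hu : Tendsto u l (𝓝 u₀)) (hv : Tendsto v l (𝓝 v₀)) (hp : Tendsto p l (𝓝 p₀))
    (hup : u₀ < p₀) (hpv : p₀ < v₀) :
    ∀ᶠ a in l, (p a - u a) / (v a - u a) ∈ Icc 0 1 ∧
      lineMap (u a) (v a) ((p a - u a) / (v a - u a)) = p a := by
  filter_upwards [(hp.sub hu).eventually_const_lt (sub_pos.2 hup),
    (hv.sub hp).eventually_const_lt (sub_pos.2 hpv)] with a hpu hvp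
  have hvu : 0 < v a - u a := by linarith
  refine ⟨⟨div_nonneg hpu.le hvu.le, (div_le_one hvu).2 (by linarith)⟩, ?_⟩
  rw [lineMap_apply_ring', div_mul_cancel₀ _ hvu.ne']
  ring

end

section
variable {ι : Type*} [DecidableEq ι]

theorem lineMap_update_update_div (β : ι → ℝ) (k : ι) {u v : ℝ} (huv : u ≠ v) :
    lineMap (update β k u) (update β k v) ((β k - u) / (v - u)) = β := by
  ext i
  rcases eq_or_ne i k with rfl | hi
  · simp only [lineMap_apply_module, Pi.add_apply, Pi.smul_apply, update_self, smul_eq_mul]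
    field_simp [sub_ne_zero.2 huv.symm]
    ring
  · simp only [lineMap_apply_module, Pi.add_apply, Pi.smul_apply, update_of_ne hi, smul_eq_mul]
    ring

end

section
variable {α ι : Type*} [DecidableEq ι] {l : Filter α} {f : α → (ι → ℝ) → ℝ} {g : (ι → ℝ) → ℝ}

theorem exists_tendsto_eventually_eqOn_and_le (hf : ∀ a, ConvexOn ℝ univ (f a))
    (hg : UpperSemicontinuous g)
    (happrox : ∀ γ, ∀ c > g γ, ∃ γs : α → ι → ℝ, Tendsto γs l (𝓝 γ) ∧ ∀ᶠ a in l, f a (γs a) ≤ c)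
    (s : Finset ι) {β : ι → ℝ} {βs : α → ι → ℝ} (hβs : Tendsto βs l (𝓝 β)) {c : ℝ}
    (hc : g β < c) :
    ∃ γs : α → ι → ℝ, Tendsto γs l (𝓝 β) ∧
      ∀ᶠ a in l, (∀ i ∈ s, γs a i = βs a i) ∧ f a (γs a) ≤ c := by
  induction s using Finset.induction_on generalizing β βs with
  | empty =>
    obtain ⟨γs, hγs, hle⟩ := happrox β c hc
    exact ⟨γs, hγs, hle.mono fun a ha => ⟨by simp, ha⟩⟩
  | insert k s hks ih =>
    have hline : Tendsto (fun t : ℝ => update β k t) (𝓝 (β k)) (𝓝 β) := by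
      simpa using ((continuous_const (y := β)).update k continuous_id).tendsto (β k)
    have hnear : ∀ᶠ t in 𝓝 (β k), g (update β k t) < c := hline.eventually (hg β c hc)
    obtain ⟨u, hu, hgu⟩ := hnear.exists_lt
    obtain ⟨v, hv, hgv⟩ := hnear.exists_gt
    obtain ⟨γu, hγu, hu_ev⟩ := ih (hβs.update k tendsto_const_nhds) hgu
    obtain ⟨γv, hγv, hv_ev⟩ := ih (hβs.update k tendsto_const_nhds) hgv
    have hγuk : Tendsto (fun a => γu a k) l (𝓝 u) := by simpa using hγu.apply_nhds k
    have hγvk : Tendsto (fun a => γv a k) l (𝓝 v) := by simpa using hγv.apply_nhds k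
    set t : α → ℝ := fun a => (βs a k - γu a k) / (γv a k - γu a k)
    refine ⟨fun a => lineMap (γu a) (γv a) (t a), ?_, ?_⟩
    · rw [← lineMap_update_update_div β k (ne_of_lt (hu.trans hv))]
      exact hγu.lineMap hγv (((hβs.apply_nhds k).sub hγuk).div (hγvk.sub hγuk)
        (sub_ne_zero.2 (ne_of_gt (hu.trans hv))))
    · filter_upwards [hu_ev, hv_ev, eventually_lineMap_div_eq hγuk hγvk (hβs.apply_nhds k) hu hv]
        with a ⟨hequ, hleu⟩ ⟨heqv, hlev⟩ ⟨ht, hk⟩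
      refine ⟨fun i hi => ?_, ?_⟩
      · rw [pi_lineMap_apply]
        rcases Finset.mem_insert.1 hi with rfl | hi
        · exact hk
        · have hik : i ≠ k := ne_of_mem_of_not_mem hi hks
          rw [hequ i hi, heqv i hi, update_of_ne hik, update_of_ne hik, lineMap_same_apply]
      · exact ((hf a).le_on_segment (mem_univ _) (mem_univ _)
          (lineMap_mem_segment ℝ _ _ ht)).trans (max_le hleu hlev)

theorem eventually_le_of_convexOn_of_exists_approx [Fintype ι]
    (hf : ∀ a, ConvexOn ℝ univ (f a)) (hg : UpperSemicontinuous g)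
    (happrox : ∀ γ, ∀ c > g γ, ∃ γs : α → ι → ℝ, Tendsto γs l (𝓝 γ) ∧ ∀ᶠ a in l, f a (γs a) ≤ c)
    {β : ι → ℝ} {βs : α → ι → ℝ} (hβs : Tendsto βs l (𝓝 β)) {c : ℝ} (hc : g β < c) :
    ∀ᶠ a in l, f a (βs a) ≤ c := by
  obtain ⟨γs, -, hγs⟩ := exists_tendsto_eventually_eqOn_and_le hf hg happrox Finset.univ hβs hc
  filter_upwards [hγs] with a ⟨heq, hle⟩
  rwa [← funext fun i => heq i (Finset.mem_univ i)]

end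

theorem limsup_le_of_convex_of_exists_approx_general
    {m d : ℕ} (L : (Fin m → ℝ) → (Fin d → ℝ) → ℝ)
    (hconv : ∀ x : Fin m → ℝ, ConvexOn ℝ Set.univ (L x))
    (xs : ℕ → Fin m → ℝ) (x : Fin m → ℝ)
    (happrox : ∀ γ : Fin d → ℝ, ∃ γs : ℕ → Fin d → ℝ,
      Tendsto γs atTop (nhds γ) ∧
      ∀ ε > (0 : ℝ), ∀ᶠ n in atTop, L (xs n) (γs n) ≤ L x γ + ε) :
    ∀ (β : Fin d → ℝ) (βs : ℕ → Fin d → ℝ), Tendsto βs atTop (nhds β) →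
      ∀ ε > (0 : ℝ), ∀ᶠ n in atTop, L (xs n) (βs n) ≤ L x β + ε := by
  intro β βs hβs ε hε
  have hcont : Continuous (L x) :=
    continuousOn_univ.1 ((hconv x).continuousOn isOpen_univ)
  refine eventually_le_of_convexOn_of_exists_approx (fun n => hconv (xs n))
    hcont.upperSemicontinuous (fun γ c hc => ?_) hβs (lt_add_of_pos_right _ hε)
  obtain ⟨γs, hγs, hle⟩ := happrox γ
  exact ⟨γs, hγs, by simpa using hle (c - L x γ) (sub_pos.2 hc)⟩

/-- **Convexity argument for joint upper semicontinuity** (end of proof of continuity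
of the Regime 2 local rate function).  Let `L : ℝ^m × ℝ^d → ℝ` be convex in its
second argument, let `xₙ → x`, and suppose that for every `γ` there is a sequence
`γₙ → γ` with `limsup_n L(xₙ, γₙ) ≤ L(x, γ)`.  Then for every `β` and *every*
sequence `βₙ → β` one has `limsup_n L(xₙ, βₙ) ≤ L(x, β)`.
(Here `limsup aₙ ≤ a` is expressed as: for every `ε > 0`, eventually `aₙ ≤ a + ε`.) -/
theorem limsup_le_of_convex_of_exists_approx
    {m d : ℕ} (L : (Fin m → ℝ) → (Fin d → ℝ) → ℝ)
    (hconv : ∀ x : Fin m → ℝ, ConvexOn ℝ Set.univ (L x))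
    (xs : ℕ → Fin m → ℝ) (x : Fin m → ℝ)
    (hx : Tendsto xs atTop (nhds x))
    (happrox : ∀ γ : Fin d → ℝ, ∃ γs : ℕ → Fin d → ℝ,
      Tendsto γs atTop (nhds γ) ∧
      ∀ ε > (0 : ℝ), ∀ᶠ n in atTop, L (xs n) (γs n) ≤ L x γ + ε) :
    ∀ (β : Fin d → ℝ) (βs : ℕ → Fin d → ℝ), Tendsto βs atTop (nhds β) →
      ∀ ε > (0 : ℝ), ∀ᶠ n in atTop, L (xs n) (βs n) ≤ L x β + ε :=
  limsup_le_of_convex_of_exists_approx_general L hconv xs x happrox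
end

section
/- Let σ : ℝ → ℝ be continuous, 1-periodic, and satisfy σ(y) ≥ θ for some θ > 0 and all y, and let β > 0. Consider measurable functions v : [0,1] → (0, ∞) satisfying the constraint ∫₀¹ (σ(y) v(y))⁻¹ dy = 1/β, with cost J(v) = (β/2) ∫₀¹ v(y)/σ(y) dy. Then the infimum of J(v) over all such v equals (β²/2) ( ∫₀¹ σ(y)⁻¹ dy )², and it is attained by the constant control v(y) ≡ β ∫₀¹ σ(u)⁻¹ du. -/
open MeasureTheory Real

/-!
For `v > 0` and any constant `c`, `(v - c)² ≥ 0` divided by `σ v` gives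
`2c/σ ≤ v/σ + c²/(σ v)`. Integrating over `[0,1]` and using the constraint
`∫ (σ v)⁻¹ = 1/β` with the choice `c = β ∫ σ⁻¹` yields `β (∫ σ⁻¹)² ≤ ∫ v/σ`, with equality
for the constant control `v ≡ c`.
-/

lemma two_mul_mul_inv_le_div_add_sq_mul_inv {s v : ℝ} (hs : 0 < s) (hv : 0 < v) (c : ℝ) :
    2 * c * s⁻¹ ≤ v / s + c ^ 2 * (s * v)⁻¹ := by
  have hsq : v / s + c ^ 2 * (s * v)⁻¹ - 2 * c * s⁻¹ = (v - c) ^ 2 / (s * v) := by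
    field_simp
    ring
  linarith [div_nonneg (sq_nonneg (v - c)) (mul_pos hs hv).le]

section LowerBound

variable {a b : ℝ} {s v : ℝ → ℝ}

lemma two_mul_integral_inv_le (hab : a ≤ b) (hs : ∀ y ∈ Set.Icc a b, 0 < s y)
    (hv : ∀ y ∈ Set.Icc a b, 0 < v y)
    (hs_int : IntervalIntegrable (fun y => (s y)⁻¹) volume a b)
    (hvs_int : IntervalIntegrable (fun y => v y / s y) volume a b)
    (hsv_int : IntervalIntegrable (fun y => (s y * v y)⁻¹) volume a b) (c : ℝ) :
    2 * c * ∫ y in a..b, (s y)⁻¹ ≤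
      (∫ y in a..b, v y / s y) + c ^ 2 * ∫ y in a..b, (s y * v y)⁻¹ := by
  rw [← intervalIntegral.integral_const_mul, ← intervalIntegral.integral_const_mul,
    ← intervalIntegral.integral_add hvs_int (hsv_int.const_mul _)]
  refine intervalIntegral.integral_mono_on hab (hs_int.const_mul _)
    (hvs_int.add (hsv_int.const_mul _)) fun y hy => ?_
  exact two_mul_mul_inv_le_div_add_sq_mul_inv (hs y hy) (hv y hy) c

lemma mul_sq_integral_inv_le_integral_div {β : ℝ} (hβ : 0 < β) (hab : a ≤ b)
    (hs : ∀ y ∈ Set.Icc a b, 0 < s y) (hv : ∀ y ∈ Set.Icc a b, 0 < v y)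
    (hs_int : IntervalIntegrable (fun y => (s y)⁻¹) volume a b)
    (hvs_int : IntervalIntegrable (fun y => v y / s y) volume a b)
    (hcon : (∫ y in a..b, (s y * v y)⁻¹) = 1 / β) :
    β * (∫ y in a..b, (s y)⁻¹) ^ 2 ≤ ∫ y in a..b, v y / s y := by
  have hsv_int : IntervalIntegrable (fun y => (s y * v y)⁻¹) volume a b :=
    intervalIntegral.intervalIntegrable_of_integral_ne_zero (by rw [hcon]; positivity)
  set I := ∫ y in a..b, (s y)⁻¹
  have hamgm := two_mul_integral_inv_le hab hs hv hs_int hvs_int hsv_int (β * I)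
  rw [hcon, show (β * I) ^ 2 * (1 / β) = β * I ^ 2 by field_simp] at hamgm
  linarith

end LowerBound

theorem regime3_local_rate_function_explicit_general
    (σ : ℝ → ℝ) (hσcont : Continuous σ)
    (θ : ℝ) (hθ : 0 < θ) (hσθ : ∀ y, θ ≤ σ y)
    (β : ℝ) (hβ : 0 < β) :
    -- the value is the attained infimum of the cost over the admissible class
    IsLeast
      {J : ℝ | ∃ v : ℝ → ℝ, Measurable v ∧ (∀ y ∈ Set.Icc (0 : ℝ) 1, 0 < v y) ∧
        IntervalIntegrable (fun y => v y / σ y) volume 0 1 ∧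
        (∫ y in (0 : ℝ)..1, (σ y * v y)⁻¹) = 1 / β ∧
        J = (β / 2) * ∫ y in (0 : ℝ)..1, v y / σ y}
      ((β ^ 2 / 2) * (∫ y in (0 : ℝ)..1, (σ y)⁻¹) ^ 2) ∧
    -- the constant control `v̄ ≡ β ∫₀¹ σ⁻¹` satisfies the constraint …
    (∫ y in (0 : ℝ)..1, (σ y * (β * ∫ u in (0 : ℝ)..1, (σ u)⁻¹))⁻¹) = 1 / β ∧
    -- … and achieves the value
    (β / 2) * (∫ y in (0 : ℝ)..1, (β * ∫ u in (0 : ℝ)..1, (σ u)⁻¹) / σ y) =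
      (β ^ 2 / 2) * (∫ y in (0 : ℝ)..1, (σ y)⁻¹) ^ 2 := by
  have hσpos : ∀ y, 0 < σ y := fun y => hθ.trans_le (hσθ y)
  have hσinv_int : IntervalIntegrable (fun y => (σ y)⁻¹) volume 0 1 :=
    (hσcont.inv₀ fun y => (hσpos y).ne').intervalIntegrable 0 1
  set I := ∫ y in (0 : ℝ)..1, (σ y)⁻¹
  have hI : 0 < I :=
    intervalIntegral.intervalIntegral_pos_of_pos hσinv_int (fun y => inv_pos.2 (hσpos y)) one_pos
  have hconstraint : (∫ y in (0 : ℝ)..1, (σ y * (β * I))⁻¹) = 1 / β := by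
    simp_rw [mul_inv, intervalIntegral.integral_mul_const]
    change I * (β⁻¹ * I⁻¹) = 1 / β
    field_simp
  have hvalue : (β / 2) * (∫ y in (0 : ℝ)..1, (β * I) / σ y) = (β ^ 2 / 2) * I ^ 2 := by
    simp_rw [div_eq_mul_inv (β * I), intervalIntegral.integral_const_mul]
    ring
  refine ⟨⟨⟨fun _ => β * I, measurable_const, fun _ _ => mul_pos hβ hI,
    hσinv_int.const_mul _, hconstraint, hvalue.symm⟩, ?_⟩, hconstraint, hvalue⟩
  rintro _ ⟨v, -, hv, hvs_int, hcon, rfl⟩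
  have hlower := mul_sq_integral_inv_le_integral_div hβ zero_le_one (fun y _ => hσpos y) hv
    hσinv_int hvs_int hcon
  calc (β ^ 2 / 2) * I ^ 2 = (β / 2) * (β * I ^ 2) := by ring
    _ ≤ _ := by gcongr

/-- **Explicit Regime 3 local rate function in dimension one with zero drift.**
Let `σ : ℝ → ℝ` be continuous, 1-periodic with `σ ≥ θ > 0` and let `β > 0`.
Over measurable `v : [0,1] → (0,∞)` satisfying `∫₀¹ (σ v)⁻¹ = 1/β` with cost
`J(v) = (β/2)∫₀¹ v/σ`, the infimum of `J` equals `(β²/2)(∫₀¹ σ⁻¹)²` and is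
attained by the constant control `v ≡ β ∫₀¹ σ⁻¹`. -/
theorem regime3_local_rate_function_explicit
    (σ : ℝ → ℝ) (hσcont : Continuous σ) (hσper : Function.Periodic σ 1)
    (θ : ℝ) (hθ : 0 < θ) (hσθ : ∀ y, θ ≤ σ y)
    (β : ℝ) (hβ : 0 < β) :
    -- the value is the attained infimum of the cost over the admissible class
    IsLeast
      {J : ℝ | ∃ v : ℝ → ℝ, Measurable v ∧ (∀ y ∈ Set.Icc (0 : ℝ) 1, 0 < v y) ∧
        IntervalIntegrable (fun y => v y / σ y) volume 0 1 ∧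
        (∫ y in (0 : ℝ)..1, (σ y * v y)⁻¹) = 1 / β ∧
        J = (β / 2) * ∫ y in (0 : ℝ)..1, v y / σ y}
      ((β ^ 2 / 2) * (∫ y in (0 : ℝ)..1, (σ y)⁻¹) ^ 2) ∧
    -- the constant control `v̄ ≡ β ∫₀¹ σ⁻¹` satisfies the constraint …
    (∫ y in (0 : ℝ)..1, (σ y * (β * ∫ u in (0 : ℝ)..1, (σ u)⁻¹))⁻¹) = 1 / β ∧
    -- … and achieves the value
    (β / 2) * (∫ y in (0 : ℝ)..1, (β * ∫ u in (0 : ℝ)..1, (σ u)⁻¹) / σ y) =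
      (β ^ 2 / 2) * (∫ y in (0 : ℝ)..1, (σ y)⁻¹) ^ 2 :=
  regime3_local_rate_function_explicit_general σ hσcont θ hθ hσθ β hβ
end
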